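/- arXiv:1708.04825 — 2 statements merged into one kernel-verified Lean document; each statement's English description precedes it below -/
import Mathlib

section
/- Let A be a real E×N matrix and let φ : ℝ × ℝ × ℝ^E → ℝ^N be differentiable at x_p = (T_p, P_p, b_p) and satisfy A · φ(T, P, b) = b for all (T, P, b). Then for any target input x_q = (T_q, P_q, b_q), the first-order Taylor prediction n_q := φ(x_p) + Dφ(x_p)(x_q − x_p) = φ(x_p) + (∂φ/∂T)(x_p)(T_q − T_p) + (∂φ/∂P)(x_p)(P_q − P_p) + (∂φ/∂b)(x_p)(b_q − b_p) exactly satisfies the mass conservation condition A n_q = b_q. -/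
/-- If the chemical equilibrium function `φ : ℝ × ℝ × ℝ^E → ℝ^N`
is differentiable at `x_p = (T_p, P_p, b_p)` and satisfies the mass-balance identity
`A · φ(T, P, b) = b` for all inputs, then for any target input `x_q = (T_q, P_q, b_q)`,
the first-order Taylor prediction `n_q = φ(x_p) + Dφ(x_p)(x_q − x_p)` exactly satisfies
the mass conservation condition `A n_q = b_q`. -/
theorem taylor_prediction_mass_conservation
    (E N : ℕ) (A : Matrix (Fin E) (Fin N) ℝ)
    (φ : ℝ × ℝ × (Fin E → ℝ) → (Fin N → ℝ))
    (xp : ℝ × ℝ × (Fin E → ℝ))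
    (hdiff : DifferentiableAt ℝ φ xp)
    (hmass : ∀ T P : ℝ, ∀ b : Fin E → ℝ, A.mulVec (φ (T, P, b)) = b)
    (xq : ℝ × ℝ × (Fin E → ℝ))
    (nq : Fin N → ℝ)
    (hnq : nq = φ xp + fderiv ℝ φ xp (xq - xp)) :
    A.mulVec nq = xq.2.2 := by
  -- the matrix as a continuous linear map
  set g : (Fin N → ℝ) →L[ℝ] (Fin E → ℝ) :=
    LinearMap.toContinuousLinearMap A.mulVecLin with hg
  -- the projection onto the third coordinate as a continuous linear map
  set p : (ℝ × ℝ × (Fin E → ℝ)) →L[ℝ] (Fin E → ℝ) :=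
    (ContinuousLinearMap.snd ℝ ℝ (Fin E → ℝ)).comp
      (ContinuousLinearMap.snd ℝ ℝ (ℝ × (Fin E → ℝ))) with hp
  have hcomp : (g : (Fin N → ℝ) → (Fin E → ℝ)) ∘ φ = p := by
    funext x
    simpa [g, p] using hmass x.1 x.2.1 x.2.2
  have hD : g.comp (fderiv ℝ φ xp) = p := by
    have h1 : fderiv ℝ ((g : (Fin N → ℝ) → (Fin E → ℝ)) ∘ φ) xp
        = g.comp (fderiv ℝ φ xp) :=
      ((g.hasFDerivAt).comp xp hdiff.hasFDerivAt).fderiv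
    rw [hcomp] at h1
    rw [← h1, p.fderiv]
  have hφxp : A.mulVec (φ xp) = xp.2.2 := by
    simpa using hmass xp.1 xp.2.1 xp.2.2
  have hDv : A.mulVec (fderiv ℝ φ xp (xq - xp)) = (xq - xp).2.2 := by
    have := DFunLike.congr_fun hD (xq - xp)
    simpa [g, p] using this
  rw [hnq, Matrix.mulVec_add, hφxp, hDv]
  simp [Prod.snd_sub]
end

section
/- Let A be a real E×N matrix of rank E (full rank, E ≤ N) and let ν be a real (N−E)×N matrix with ν Aᵀ = 0 and rank ν = N − E. Let R > 0, T > 0, μ° ∈ ℝ^N, let a ∈ ℝ^N have strictly positive entries, set μ_i = μ°_i + R T ln a_i, and define ln K_m := −(1/(R T)) ∑_{i=1}^N ν_{mi} μ°_i for m = 1,…,N−E. Let n ∈ ℝ^N with n_i ≥ 0 for all i. Then the following are equivalent: (a) there exist y ∈ ℝ^E and z ∈ ℝ^N such that μ − Aᵀ y − z = 0, z_i ≥ 0 for all i, and n_i z_i = 0 for all i (the KKT conditions); (b) there exists w ∈ ℝ^N such that 0 < w_i ≤ 1 for all i, n_i ln w_i = 0 for all i, and ln K_m = ∑_{i=1}^N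 ν_{mi} (ln a_i + ln w_i) for all m (the extended law of mass action conditions). The correspondence between the two sets of auxiliary variables is w_i = exp(−z_i/(R T)). -/
open Finset Matrix

/-- Forward direction: KKT conditions imply xLMA conditions with `w_i = exp(-z_i/(R T))`. -/
lemma kkt_forward
    (E N : ℕ)
    (A : Matrix (Fin E) (Fin N) ℝ)
    (ν : Matrix (Fin (N - E)) (Fin N) ℝ)
    (hνA : ν * Aᵀ = 0)
    (R T : ℝ) (hR : 0 < R) (hT : 0 < T)
    (μ0 a : Fin N → ℝ)
    (μ : Fin N → ℝ) (hμ : ∀ i, μ i = μ0 i + R * T * Real.log (a i))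
    (lnK : Fin (N - E) → ℝ)
    (hlnK : ∀ m, lnK m = -(1 / (R * T)) * ∑ i, ν m i * μ0 i)
    (n : Fin N → ℝ)
    (y : Fin E → ℝ) (z : Fin N → ℝ)
    (h1 : ∀ i, μ i - Aᵀ.mulVec y i - z i = 0)
    (h2 : ∀ i, 0 ≤ z i)
    (h3 : ∀ i, n i * z i = 0) :
    ((∀ i, 0 < Real.exp (-(z i) / (R * T)) ∧ Real.exp (-(z i) / (R * T)) ≤ 1) ∧
      (∀ i, n i * Real.log (Real.exp (-(z i) / (R * T))) = 0) ∧
      (∀ m, lnK m = ∑ i, ν m i *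
        (Real.log (a i) + Real.log (Real.exp (-(z i) / (R * T)))))) := by
  have hRT : 0 < R * T := mul_pos hR hT
  refine ⟨?_, ?_, ?_⟩
  · intro i
    refine ⟨Real.exp_pos _, Real.exp_le_one_iff.mpr ?_⟩
    exact div_nonpos_of_nonpos_of_nonneg (neg_nonpos_of_nonneg (h2 i)) hRT.le
  · intro i
    rw [Real.log_exp]
    have : n i * (-(z i) / (R * T)) = -(n i * z i) / (R * T) := by ring
    rw [this, h3 i]
    simp
  · intro m
    -- key: ν (Aᵀ y) = 0
    have hzero : ν.mulVec (Aᵀ.mulVec y) m = 0 := by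
      rw [Matrix.mulVec_mulVec, hνA]
      simp [Matrix.mulVec]
    have hzero' : ∑ i, ν m i * Aᵀ.mulVec y i = 0 := hzero
    have hterm : ∀ i, ν m i * (Real.log (a i) + Real.log (Real.exp (-(z i) / (R * T))))
        = (1 / (R * T)) * (ν m i * Aᵀ.mulVec y i - ν m i * μ0 i) := by
      intro i
      have hz : z i = μ0 i + R * T * Real.log (a i) - Aᵀ.mulVec y i := by
        have := h1 i
        rw [hμ i] at this
        linarith
      rw [Real.log_exp, hz]
      field_simp
      ring
    calc lnK m = -(1 / (R * T)) * ∑ i, ν m i * μ0 i := hlnK m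
      _ = (1 / (R * T)) * ((∑ i, ν m i * Aᵀ.mulVec y i) - ∑ i, ν m i * μ0 i) := by
          rw [hzero']; ring
      _ = (1 / (R * T)) * ∑ i, (ν m i * Aᵀ.mulVec y i - ν m i * μ0 i) := by
          rw [Finset.sum_sub_distrib]
      _ = ∑ i, (1 / (R * T)) * (ν m i * Aᵀ.mulVec y i - ν m i * μ0 i) := by
          rw [Finset.mul_sum]
      _ = ∑ i, ν m i * (Real.log (a i) + Real.log (Real.exp (-(z i) / (R * T)))) := by
          exact Finset.sum_congr rfl fun i _ => (hterm i).symm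

/-- Equivalence between the KKT conditions of Gibbs energy
minimization and the extended law of mass action conditions, with the
correspondence `w_i = exp(−z_i/(R T))` between the auxiliary variables. -/
theorem kkt_iff_extended_law_of_mass_action
    (E N : ℕ) (hEN : E ≤ N)
    (A : Matrix (Fin E) (Fin N) ℝ) (hArank : A.rank = E)
    (ν : Matrix (Fin (N - E)) (Fin N) ℝ)
    (hνA : ν * Aᵀ = 0) (hνrank : ν.rank = N - E)
    (R T : ℝ) (hR : 0 < R) (hT : 0 < T)
    (μ0 a : Fin N → ℝ) (ha : ∀ i, 0 < a i)
    (μ : Fin N → ℝ) (hμ : ∀ i, μ i = μ0 i + R * T * Real.log (a i))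
    (lnK : Fin (N - E) → ℝ)
    (hlnK : ∀ m, lnK m = -(1 / (R * T)) * ∑ i, ν m i * μ0 i)
    (n : Fin N → ℝ) (hn : ∀ i, 0 ≤ n i) :
    ((∃ y : Fin E → ℝ, ∃ z : Fin N → ℝ,
        (∀ i, μ i - Aᵀ.mulVec y i - z i = 0) ∧
        (∀ i, 0 ≤ z i) ∧
        (∀ i, n i * z i = 0))
      ↔
      (∃ w : Fin N → ℝ,
        (∀ i, 0 < w i ∧ w i ≤ 1) ∧
        (∀ i, n i * Real.log (w i) = 0) ∧
        (∀ m, lnK m = ∑ i, ν m i * (Real.log (a i) + Real.log (w i)))))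
    ∧
    (∀ y : Fin E → ℝ, ∀ z : Fin N → ℝ,
      ((∀ i, μ i - Aᵀ.mulVec y i - z i = 0) ∧
        (∀ i, 0 ≤ z i) ∧
        (∀ i, n i * z i = 0)) →
      ((∀ i, 0 < Real.exp (-(z i) / (R * T)) ∧ Real.exp (-(z i) / (R * T)) ≤ 1) ∧
        (∀ i, n i * Real.log (Real.exp (-(z i) / (R * T))) = 0) ∧
        (∀ m, lnK m = ∑ i, ν m i *
          (Real.log (a i) + Real.log (Real.exp (-(z i) / (R * T))))))) := by
  have hRT : 0 < R * T := mul_pos hR hT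
  constructor
  · constructor
    · rintro ⟨y, z, h1, h2, h3⟩
      refine ⟨fun i => Real.exp (-(z i) / (R * T)), ?_⟩
      exact kkt_forward E N A ν hνA R T hR hT μ0 a μ hμ lnK hlnK n y z h1 h2 h3
    · rintro ⟨w, hw, hnw, hK⟩
      set z : Fin N → ℝ := fun i => -(R * T) * Real.log (w i) with hz
      -- range Aᵀ.mulVecLin = ker ν.mulVecLin
      have hle : LinearMap.range Aᵀ.mulVecLin ≤ LinearMap.ker ν.mulVecLin := by
        rintro x ⟨u, rfl⟩
        simp only [LinearMap.mem_ker, Matrix.mulVecLin_apply, Matrix.mulVec_mulVec, hνA]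
        simp [Matrix.mulVec]
      have hrange : Module.finrank ℝ (LinearMap.range Aᵀ.mulVecLin) = E := by
        rw [← Matrix.rank, Matrix.rank_transpose, hArank]
      have hker : Module.finrank ℝ (LinearMap.ker ν.mulVecLin) = E := by
        have h := LinearMap.finrank_range_add_finrank_ker ν.mulVecLin
        rw [Module.finrank_fintype_fun_eq_card] at h
        have hr : Module.finrank ℝ (LinearMap.range ν.mulVecLin) = N - E := by
          rw [← Matrix.rank, hνrank]
        rw [hr, Fintype.card_fin] at h
        omega
      have heq : LinearMap.range Aᵀ.mulVecLin = LinearMap.ker ν.mulVecLin :=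
        Submodule.eq_of_le_of_finrank_eq hle (by rw [hrange, hker])
      -- the vector μ - z is in the kernel of ν
      set v : Fin N → ℝ := fun i => μ i - z i with hv
      have hvker : v ∈ LinearMap.ker ν.mulVecLin := by
        simp only [LinearMap.mem_ker, Matrix.mulVecLin_apply]
        funext m
        have hvi : ∀ i, v i = μ0 i + R * T * (Real.log (a i) + Real.log (w i)) := by
          intro i; simp only [hv, hz, hμ i]; ring
        have : ν.mulVec v m = (∑ i, ν m i * μ0 i)
            + R * T * ∑ i, ν m i * (Real.log (a i) + Real.log (w i)) := by
          simp only [Matrix.mulVec, dotProduct]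
          rw [Finset.mul_sum, ← Finset.sum_add_distrib]
          exact Finset.sum_congr rfl fun i _ => by rw [hvi i]; ring
        rw [this, ← hK m]
        have hsum : ∑ i, ν m i * μ0 i = -(R * T) * lnK m := by
          rw [hlnK m]; field_simp
        rw [hsum]
        simp
      rw [← heq] at hvker
      obtain ⟨y, hy⟩ := hvker
      refine ⟨y, z, ?_, ?_, ?_⟩
      · intro i
        have : Aᵀ.mulVec y i = v i := by
          rw [← Matrix.mulVecLin_apply, hy]
        rw [this]; simp [hv]
      · intro i
        have hlog : Real.log (w i) ≤ 0 := Real.log_nonpos (hw i).1.le (hw i).2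
        have : 0 ≤ -(R * T) * Real.log (w i) := by nlinarith
        simpa [hz] using this
      · intro i
        have : n i * z i = -(R * T) * (n i * Real.log (w i)) := by
          simp only [hz]; ring
        rw [this, hnw i, mul_zero]
  · intro y z ⟨h1, h2, h3⟩
    exact kkt_forward E N A ν hνA R T hR hT μ0 a μ hμ lnK hlnK n y z h1 h2 h3
end
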